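/- Suppose Assumption (A) holds and r(n−1) < (1/10)(1/α + 1/β − 1). Then for every sign vector s ∈ {−1,+1}^{n−1}, |P^(s)₂|/(C₁ − P^(s)₁) < βφ/3, where φ = 1/α + 1/β − 1. -/

import Mathlib

open Matrix Polynomial Finset

noncomputable section

/-- The companion-type matrix of the `n`-dimensional border-collision normal form:
`(i,1)` entry is `-a i`, `(i,i+1)` entries are `1`, all other entries `0`. -/
def bcMat (n : ℕ) (a : Fin n → ℝ) : Matrix (Fin n) (Fin n) ℝ :=
  Matrix.of fun i j =>
    (if (j : ℕ) = 0 then -a i else 0) + (if (j : ℕ) = (i : ℕ) + 1 then 1 else 0)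

/-- The vector `b = (1,0,…,0)`. -/
def bcVec (n : ℕ) : Fin n → ℝ := fun i => if (i : ℕ) = 0 then 1 else 0

/-- `ρ` is an eigenvalue of `M` (of algebraic multiplicity one, automatic when `|ρ| > r`)
and all remaining eigenvalues of `M` over `ℂ`, counted with multiplicity,
have modulus at most `r`. -/
def specA (n : ℕ) (M : Matrix (Fin n) (Fin n) ℝ) (ρ r : ℝ) : Prop :=
  ∃ lam : Fin (n - 1) → ℂ,
    (∀ j, ‖lam j‖ ≤ r) ∧
      M.charpoly.map (algebraMap ℝ ℂ) =
        (X - C (ρ : ℂ)) * ∏ j : Fin (n - 1), (X - C (lam j))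

/-- Assumption (A). -/
def assumptionA (n : ℕ) (aL aR : Fin n → ℝ) (α β r : ℝ) : Prop :=
  1 < α ∧ 1 < β ∧ 0 < r ∧ r < 1 ∧
    specA n (bcMat n aL) α r ∧ specA n (bcMat n aR) (-β) r

/-- The border-collision normal form map `f`. -/
def bcf (n : ℕ) (aL aR : Fin n → ℝ) (x : Fin n → ℝ) : Fin n → ℝ :=
  if ∀ i : Fin n, (i : ℕ) = 0 → x i ≤ 0 then (bcMat n aL).mulVec x + bcVec n
  else (bcMat n aR).mulVec x + bcVec n

/-- The fixed point `Y = (I − A_L)⁻¹ b`. -/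
def Ypt (n : ℕ) (aL : Fin n → ℝ) : Fin n → ℝ :=
  ((1 - bcMat n aL)⁻¹).mulVec (bcVec n)

/-- The row vector `u = (α^{n-1}, …, α, 1)`. -/
def uvec (n : ℕ) (α : ℝ) : Fin n → ℝ := fun i => α ^ (n - 1 - (i : ℕ))

/-- The hyperplane `E = {x : uᵀ(x − Y) = 0}`. -/
def Eset (n : ℕ) (aL : Fin n → ℝ) (α : ℝ) : Set (Fin n → ℝ) :=
  {x | ∑ i : Fin n, uvec n α i * (x i - Ypt n aL i) = 0}

/-- The slab `H = {x : |x_i| ≤ M_i r^{i-1}, i = 2,…,n}` with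
`M_i = (2α/(α−1))·binom(n−1,i−1)`. -/
def Hset (n : ℕ) (α r : ℝ) : Set (Fin n → ℝ) :=
  {x | ∀ i : Fin n, 1 ≤ (i : ℕ) →
    |x i| ≤ 2 * α / (α - 1) * ((n - 1).choose (i : ℕ) : ℝ) * r ^ (i : ℕ)}

/-- The first component `C₁` of the point `C`. -/
def Cfirst (n : ℕ) (aL aR : Fin n → ℝ) (α : ℝ) : ℝ :=
  (1 - 1 / (1 - bcMat n aL).det +
      1 / (1 - bcMat n aL).det *
        ∑ k ∈ univ.filter (fun k : Fin n => 1 ≤ (k : ℕ)),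
          α ^ (-((k : ℕ) : ℤ)) *
            ∑ j ∈ univ.filter (fun j : Fin n => (k : ℕ) ≤ (j : ℕ)), aL j) /
    ∑ i : Fin n, α ^ (-((i : ℕ) : ℤ)) * aR i

/-- The point `C = (C₁, 0, …, 0)`. -/
def Cpt (n : ℕ) (aL aR : Fin n → ℝ) (α : ℝ) : Fin n → ℝ :=
  fun i => if (i : ℕ) = 0 then Cfirst n aL aR α else 0

/-- The polytope `Ω = Conv({C} ∪ (E ∩ H))`. -/
def OmegaSet (n : ℕ) (aL aR : Fin n → ℝ) (α r : ℝ) : Set (Fin n → ℝ) :=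
  convexHull ℝ ({Cpt n aL aR α} ∪ (Eset n aL α ∩ Hset n α r))

/-- The cone `Ψ` of scalar multiples of vectors `(1, m₁, …, m_{n-1})` with
`|m_i| ≤ N_i r^{i-1}`, `N_i = ((min(α,β)−1)/2)·binom(n−1,i−1)`. -/
def PsiSet (n : ℕ) (α β r : ℝ) : Set (Fin n → ℝ) :=
  {x | ∃ γ : ℝ, ∃ v : Fin n → ℝ,
    (∀ i : Fin n, (i : ℕ) = 0 → v i = 1) ∧
    (∀ i : Fin n, 1 ≤ (i : ℕ) →
      |v i| ≤ (min α β - 1) / 2 * ((n - 1).choose ((i : ℕ) - 1) : ℝ) * r ^ ((i : ℕ) - 1)) ∧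
    x = γ • v}

/-- `P` is the vertex `P^(s)`: the point of `E` whose `i`-th component, `i = 2,…,n`,
is `s_{i-1}·M_i r^{i-1}`. -/
def isVertexP (n : ℕ) (aL : Fin n → ℝ) (α r : ℝ) (s : Fin (n - 1) → ℝ)
    (P : Fin n → ℝ) : Prop :=
  P ∈ Eset n aL α ∧
    ∀ i : Fin n, ∀ _h : 1 ≤ (i : ℕ),
      P i = s ⟨(i : ℕ) - 1, by have := i.isLt; omega⟩ *
        (2 * α / (α - 1) * ((n - 1).choose (i : ℕ) : ℝ) * r ^ (i : ℕ))

/-- The `k`-th elementary symmetric polynomial of `η`. -/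
def esym {m : ℕ} (η : Fin m → ℂ) (k : ℕ) : ℂ :=
  ∑ t ∈ powersetCard k univ, ∏ j ∈ t, η j

end

/-!
Since `p_L(α) = 0`, where `p(x) = x^n + Σ aᵢ x^(n-i)` is the characteristic polynomial of the
normal form, the vector `(1, α⁻¹, …, α^(1-n)) = α^(1-n) u` is a left eigenvector of `A_L` for `α`,
hence of `I − A_L` for `1 − α`. Pairing it with `(I − A_L) Y = b` shows that
`E = {x : Σ α^(1-i) xᵢ = 1/(1 − α)}`, so `P₁ = 1/(1 − α) − T` with `T = Σ_{i≥2} α^(1-i) Pᵢ` and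
`|T| ≤ 2((1 + r)^(n-1) − 1)/(α − 1) ≤ 4ε/(α − 1)`, where `ε = (n − 1) r`.
Swapping the double sum in `C₁` and summing the geometric series, the numerator of `C₁` collapses
to `α/(α − 1)` and its denominator is `α^(1-n) p_R(α) − α = (α + β) g − α`, where
`g = ∏ (1 − μⱼ/α)` over the small eigenvalues `μⱼ` of `A_R`, so `|g − 1| ≤ 2ε`.
As `|P₂| = 2αε/(α − 1)`, the claim becomes an inequality between real numbers that follows
from `10ε < φ`. (Indices here are the paper's; `Fin n` in the code counts from `0`.)
-/

theorem scalar_sub_bcMat_apply (n : ℕ) (a : Fin n → ℝ) (x : ℝ) (i j : Fin n) :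
    (scalar (Fin n) x - bcMat n a) i j =
      (if (i : ℕ) = j then x else 0) + (if (j : ℕ) = 0 then a i else 0) -
        if (j : ℕ) = i + 1 then 1 else 0 := by
  simp only [scalar_apply, Matrix.sub_apply, diagonal_apply, Fin.ext_iff, bcMat, of_apply]
  split_ifs <;> ring

theorem scalar_sub_bcMat_submatrix_castSucc (n : ℕ) (a : Fin (n + 1) → ℝ) (x : ℝ) :
    (scalar (Fin (n + 1)) x - bcMat (n + 1) a).submatrix Fin.castSucc Fin.castSucc =
      scalar (Fin n) x - bcMat n (a ∘ Fin.castSucc) := by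
  ext i j
  simp only [submatrix_apply, scalar_sub_bcMat_apply, Fin.val_castSucc, Function.comp_apply]

theorem det_scalar_sub_bcMat_submatrix_castSucc_succ (n : ℕ) (a : Fin (n + 1) → ℝ) (x : ℝ) :
    ((scalar (Fin (n + 1)) x - bcMat (n + 1) a).submatrix Fin.castSucc Fin.succ).det =
      (-1) ^ n := by
  have hlower : ((scalar (Fin (n + 1)) x - bcMat (n + 1) a).submatrix
      Fin.castSucc Fin.succ).BlockTriangular OrderDual.toDual := by
    intro p q hpq
    have : (p : ℕ) < q := hpq
    rw [submatrix_apply, scalar_sub_bcMat_apply, Fin.val_castSucc, Fin.val_succ,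
      if_neg (by omega), if_neg (by omega), if_neg (by omega)]
    ring
  rw [det_of_isLowerTriangular _ hlower]
  simp only [submatrix_apply, scalar_sub_bcMat_apply, Fin.val_castSucc, Fin.val_succ]
  simp

/-- Laplace expansion along the last row: only the entries in the first and last column are
nonzero, and deleting the last row and column gives the same matrix one size smaller. -/
theorem det_scalar_sub_bcMat (n : ℕ) (a : Fin n → ℝ) (x : ℝ) :
    (scalar (Fin n) x - bcMat n a).det = x ^ n + ∑ i, a i * x ^ (n - 1 - i) := by
  induction n with
  | zero => simp
  | succ n ih =>
    rcases n with _ | n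
    · rw [det_fin_one, scalar_sub_bcMat_apply]
      simp
    have hlast : ((Fin.last (n + 1) : Fin (n + 2)) : ℕ) = n + 1 := rfl
    have hshift : ∑ i : Fin (n + 1), a i.castSucc * x ^ (n + 1 - i) =
        x * ∑ i : Fin (n + 1), a i.castSucc * x ^ (n - i) := by
      rw [mul_sum]
      refine sum_congr rfl fun i _ => ?_
      rw [show n + 1 - i = n - i + 1 by omega, pow_succ]
      ring
    have hsign : ((-1 : ℝ) ^ (n + 1)) * (-1) ^ (n + 1) = 1 := by
      rw [← mul_pow]; norm_num
    rw [det_succ_row _ (Fin.last _), Fintype.sum_eq_add 0 (Fin.last _) (by simp [Fin.ext_iff])]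
    · rw [Fin.succAbove_last, Fin.succAbove_zero, det_scalar_sub_bcMat_submatrix_castSucc_succ,
        scalar_sub_bcMat_submatrix_castSucc, ih, scalar_sub_bcMat_apply, scalar_sub_bcMat_apply,
        Fin.sum_univ_castSucc (fun i => a i * _)]
      simp only [hlast, Fin.val_zero, Fin.val_castSucc, Function.comp_apply, Nat.add_sub_cancel,
        Nat.sub_self, hshift, if_true, if_neg (Nat.add_one_ne_zero n),
        if_neg (show 0 ≠ n + 1 + 1 by omega), if_neg (show n + 1 ≠ n + 1 + 1 by omega),
        Even.neg_one_pow (Even.add_self (n + 1))]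
      linear_combination a (Fin.last (n + 1)) * hsign
    · rintro j ⟨hj0, hjl⟩
      have hj0 : (j : ℕ) ≠ 0 := Fin.val_ne_iff.mpr hj0
      have hjl : (j : ℕ) ≠ n + 1 := Fin.val_ne_iff.mpr hjl
      rw [scalar_sub_bcMat_apply, if_neg (by omega), if_neg hj0, if_neg (by omega)]
      simp

theorem bcMat_charpoly_eval (n : ℕ) (a : Fin n → ℝ) (x : ℝ) :
    (bcMat n a).charpoly.eval x = x ^ n + ∑ i, a i * x ^ (n - 1 - i) := by
  rw [eval_charpoly, det_scalar_sub_bcMat]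

theorem det_one_sub_bcMat (n : ℕ) (a : Fin n → ℝ) : (1 - bcMat n a).det = 1 + ∑ i, a i := by
  simpa using det_scalar_sub_bcMat n a 1

theorem bcMat_charpoly_eval_eq_pow_mul {n : ℕ} (hn : 0 < n) (a : Fin n → ℝ) {x : ℝ}
    (hx : x ≠ 0) :
    (bcMat n a).charpoly.eval x = x ^ (n - 1) * (x + ∑ i, a i * x⁻¹ ^ (i : ℕ)) := by
  have hpow (i : Fin n) : x ^ (n - 1 - i) = x ^ (n - 1) * x⁻¹ ^ (i : ℕ) := by
    rw [pow_sub₀ x hx (by omega), inv_pow]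
  simp only [bcMat_charpoly_eval, hpow, mul_add, mul_sum]
  rw [← pow_succ, Nat.sub_add_cancel hn]
  congr 1
  exact sum_congr rfl fun i _ => by ring

theorem norm_prod_one_add_sub_one_le_two_mul {ι R : Type*} [NormedCommRing R] [NormOneClass R]
    (t : Finset ι) (f : ι → R) (h : ∑ i ∈ t, ‖f i‖ ≤ 1) :
    ‖∏ i ∈ t, (1 + f i) - 1‖ ≤ 2 * ∑ i ∈ t, ‖f i‖ := by
  have hnonneg : 0 ≤ ∑ i ∈ t, ‖f i‖ := sum_nonneg fun i _ => norm_nonneg _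
  calc ‖∏ i ∈ t, (1 + f i) - 1‖ ≤ Real.exp (∑ i ∈ t, ‖f i‖) - 1 :=
        t.norm_prod_one_add_sub_one_le f
    _ ≤ |Real.exp (∑ i ∈ t, ‖f i‖) - 1| := le_abs_self _
    _ ≤ 2 * |∑ i ∈ t, ‖f i‖| := Real.abs_exp_sub_one_le (by rwa [abs_of_nonneg hnonneg])
    _ = 2 * ∑ i ∈ t, ‖f i‖ := by rw [abs_of_nonneg hnonneg]

theorem one_add_pow_sub_one_le {r : ℝ} (hr : 0 ≤ r) {m : ℕ} (hmr : m * r ≤ 1) :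
    (1 + r) ^ m - 1 ≤ 2 * (m * r) := by
  have := norm_prod_one_add_sub_one_le_two_mul (range m) (fun _ => r) (by simpa [abs_of_nonneg hr])
  simpa [abs_of_nonneg hr] using (le_abs_self _).trans this

theorem charpoly_eval_ofReal_eq_prod {n k : ℕ} {M : Matrix (Fin n) (Fin n) ℝ} {ρ : ℝ}
    {lam : Fin k → ℂ}
    (hfac : M.charpoly.map (algebraMap ℝ ℂ) = (X - C (ρ : ℂ)) * ∏ j, (X - C (lam j))) (x : ℝ) :
    ((M.charpoly.eval x : ℝ) : ℂ) = (x - ρ) * ∏ j, (x - lam j) := by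
  have := congrArg (eval (x : ℂ)) hfac
  simpa [eval_prod, ← Complex.coe_algebraMap, aeval_algebraMap_apply_eq_algebraMap_eval] using this

namespace specA

variable {n : ℕ} {ρ r : ℝ}

theorem charpoly_eval_self {M : Matrix (Fin n) (Fin n) ℝ} (h : specA n M ρ r) :
    M.charpoly.eval ρ = 0 := by
  obtain ⟨lam, -, hfac⟩ := h
  simpa using charpoly_eval_ofReal_eq_prod hfac ρ

theorem det_one_sub_ne_zero {M : Matrix (Fin n) (Fin n) ℝ} (h : specA n M ρ r) (hr : r < 1)
    (hρ : ρ ≠ 1) : (1 - M).det ≠ 0 := by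
  obtain ⟨lam, hlam, hfac⟩ := h
  have heval := charpoly_eval_ofReal_eq_prod hfac 1
  rw [eval_charpoly, map_one] at heval
  intro hdet
  rw [hdet, Complex.ofReal_zero, eq_comm, mul_eq_zero, prod_eq_zero_iff] at heval
  rcases heval with h1 | ⟨j, -, hj⟩
  · exact hρ (by exact_mod_cast (sub_eq_zero.mp h1).symm)
  · have := hlam j
    rw [← sub_eq_zero.mp hj] at this
    simp at this
    linarith

theorem exists_charpoly_eval_eq {M : Matrix (Fin n) (Fin n) ℝ} (h : specA n M ρ r) {x : ℝ}
    (hx : 1 ≤ x) (hxρ : x ≠ ρ) (hr : ((n - 1 : ℕ) : ℝ) * r ≤ 1) :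
    ∃ g : ℝ, M.charpoly.eval x = (x - ρ) * x ^ (n - 1) * g ∧
      |g - 1| ≤ 2 * (((n - 1 : ℕ) : ℝ) * r) := by
  obtain ⟨lam, hlam, hfac⟩ := h
  have hx0 : (x : ℂ) ≠ 0 := by exact_mod_cast (by linarith : x ≠ 0)
  have hxρ' : (x : ℂ) - ρ ≠ 0 := sub_ne_zero.mpr (by exact_mod_cast hxρ)
  set z : ℂ := ∏ j, (1 + -(lam j / x))
  have hprod : ∏ j, ((x : ℂ) - lam j) = (x : ℂ) ^ (n - 1) * z := by
    rw [← Fin.prod_const, ← prod_mul_distrib]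
    exact prod_congr rfl fun j _ => by field_simp; ring
  have hnorm (j : Fin (n - 1)) : ‖-(lam j / x)‖ ≤ r := by
    rw [norm_neg, norm_div, Complex.norm_real, Real.norm_of_nonneg (by linarith)]
    have hr0 : 0 ≤ r := (norm_nonneg _).trans (hlam j)
    exact div_le_of_le_mul₀ (by linarith) hr0 ((hlam j).trans (le_mul_of_one_le_right hr0 hx))
  have hsum : ∑ j, ‖-(lam j / x)‖ ≤ ((n - 1 : ℕ) : ℝ) * r :=
    (sum_le_sum fun j _ => hnorm j).trans (by simp)
  set g := M.charpoly.eval x / ((x - ρ) * x ^ (n - 1))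
  have hgz : (g : ℂ) = z := by
    rw [Complex.ofReal_div, charpoly_eval_ofReal_eq_prod hfac, hprod]
    push_cast
    field_simp
  refine ⟨g, ?_, ?_⟩
  · have : (x - ρ) * x ^ (n - 1) ≠ 0 := by
      exact_mod_cast mul_ne_zero hxρ' (pow_ne_zero _ hx0)
    exact (mul_div_cancel₀ _ this).symm
  · rw [← Real.norm_eq_abs, ← Complex.norm_real, Complex.ofReal_sub, hgz, Complex.ofReal_one]
    linarith [norm_prod_one_add_sub_one_le_two_mul univ _ (hsum.trans hr)]

theorem sum_mul_inv_pow_eq_neg {a : Fin n → ℝ} (h : specA n (bcMat n a) ρ r) (hn : 0 < n)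
    (hρ : ρ ≠ 0) : ∑ i, a i * ρ⁻¹ ^ (i : ℕ) = -ρ := by
  have heval := h.charpoly_eval_self
  rw [bcMat_charpoly_eval_eq_pow_mul hn a hρ, mul_eq_zero] at heval
  exact eq_neg_of_add_eq_zero_right (heval.resolve_left (pow_ne_zero _ hρ))

theorem exists_sum_mul_inv_pow_eq {a : Fin n → ℝ} (h : specA n (bcMat n a) ρ r) (hn : 0 < n)
    {x : ℝ} (hx : 1 ≤ x) (hxρ : x ≠ ρ) (hr : ((n - 1 : ℕ) : ℝ) * r ≤ 1) :
    ∃ g : ℝ, ∑ i, a i * x⁻¹ ^ (i : ℕ) = (x - ρ) * g - x ∧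
      |g - 1| ≤ 2 * (((n - 1 : ℕ) : ℝ) * r) := by
  obtain ⟨g, hg, hg1⟩ := h.exists_charpoly_eval_eq hx hxρ hr
  refine ⟨g, ?_, hg1⟩
  rw [bcMat_charpoly_eval_eq_pow_mul hn a (by positivity)] at hg
  have := mul_left_cancel₀ (pow_ne_zero (n - 1) (by positivity : x ≠ 0))
    (hg.trans (by ring : (x - ρ) * x ^ (n - 1) * g = x ^ (n - 1) * ((x - ρ) * g)))
  linarith

end specA

def powVec (n : ℕ) (y : ℝ) : Fin n → ℝ := fun i => y ^ (i : ℕ)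

theorem uvec_eq_smul_powVec (n : ℕ) {α : ℝ} (hα : α ≠ 0) :
    uvec n α = α ^ (n - 1) • powVec n α⁻¹ := by
  ext i
  simp only [uvec, powVec, Pi.smul_apply, smul_eq_mul, inv_pow]
  rw [pow_sub₀ α hα (by omega)]

theorem powVec_inv_vecMul_bcMat {n : ℕ} {a : Fin n → ℝ} {α : ℝ} (hα : α ≠ 0)
    (hroot : ∑ i, a i * α⁻¹ ^ (i : ℕ) = -α) :
    powVec n α⁻¹ ᵥ* bcMat n a = α • powVec n α⁻¹ := by
  ext j
  simp only [vecMul, dotProduct, powVec, bcMat, of_apply, Pi.smul_apply, smul_eq_mul, mul_add,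
    sum_add_distrib, mul_ite, mul_neg, mul_one, mul_zero]
  by_cases hj : (j : ℕ) = 0
  · simpa [hj, mul_comm _ (a _)] using congrArg Neg.neg hroot
  · simp only [hj, if_false, sum_const_zero, zero_add]
    rw [Fintype.sum_eq_single ⟨j - 1, by omega⟩
      fun i hi => if_neg fun h => hi (Fin.ext (by simp; omega)), if_pos (by simp; omega)]
    conv_rhs => rw [show (j : ℕ) = j - 1 + 1 by omega, pow_succ, mul_left_comm,
      mul_inv_cancel₀ hα, mul_one]

theorem powVec_inv_dotProduct_Ypt {n : ℕ} (hn : 0 < n) {a : Fin n → ℝ} {α : ℝ} (hα : α ≠ 0)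
    (hroot : ∑ i, a i * α⁻¹ ^ (i : ℕ) = -α) (hΔ : (1 - bcMat n a).det ≠ 0) :
    (1 - α) * (powVec n α⁻¹ ⬝ᵥ Ypt n a) = 1 := by
  have hY : (1 - bcMat n a) *ᵥ Ypt n a = bcVec n := by
    rw [Ypt, mulVec_mulVec, mul_nonsing_inv _ (isUnit_iff_ne_zero.mpr hΔ), one_mulVec]
  have hb : powVec n α⁻¹ ⬝ᵥ bcVec n = 1 := by
    rw [dotProduct, Fintype.sum_eq_single ⟨0, hn⟩]
    · simp [powVec, bcVec]
    · intro i hi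
      simp [bcVec, Fin.ext_iff.not.mp hi]
  conv_rhs => rw [← hb, ← hY]
  rw [dotProduct_mulVec, vecMul_sub, vecMul_one, powVec_inv_vecMul_bcMat hα hroot,
    sub_dotProduct, smul_dotProduct, smul_eq_mul]
  ring

theorem dotProduct_powVec_inv_eq_of_mem_Eset {n : ℕ} {a : Fin n → ℝ} {α : ℝ} (hα : α ≠ 0)
    {P : Fin n → ℝ} (hP : P ∈ Eset n a α) :
    powVec n α⁻¹ ⬝ᵥ P = powVec n α⁻¹ ⬝ᵥ Ypt n a := by
  have : uvec n α ⬝ᵥ (P - Ypt n a) = 0 := hP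
  rw [uvec_eq_smul_powVec n hα, smul_dotProduct, dotProduct_sub, smul_eq_mul,
    mul_eq_zero, sub_eq_zero] at this
  exact this.resolve_left (pow_ne_zero _ hα)

theorem sub_one_mul_sum_inv_pow_filter {n : ℕ} (j : Fin n) {x : ℝ} (hx : x ≠ 0) :
    (x - 1) * ∑ k ∈ univ.filter (fun k : Fin n => 1 ≤ (k : ℕ) ∧ (k : ℕ) ≤ j), x⁻¹ ^ (k : ℕ) =
      1 - x⁻¹ ^ (j : ℕ) := by
  have hIco : (range n).filter (fun k : ℕ => 1 ≤ k ∧ k ≤ j) = Ico 1 ((j : ℕ) + 1) := by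
    ext k
    simp only [mem_filter, mem_range, mem_Ico]
    omega
  rw [sum_filter, Fin.sum_univ_eq_sum_range (fun k => if 1 ≤ k ∧ k ≤ j then x⁻¹ ^ k else 0),
    ← sum_filter, hIco]
  have hgeom := geom_sum_Ico_mul x⁻¹ (by omega : 1 ≤ (j : ℕ) + 1)
  have hxinv : x * x⁻¹ = 1 := mul_inv_cancel₀ hx
  linear_combination (-x) * hgeom + (∑ k ∈ Ico 1 ((j : ℕ) + 1), x⁻¹ ^ k - x⁻¹ ^ (j : ℕ) + 1) * hxinv

theorem sub_one_mul_sum_zpow_mul_sum_filter {n : ℕ} (a : Fin n → ℝ) {x : ℝ} (hx : x ≠ 0) :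
    (x - 1) * ∑ k ∈ univ.filter (fun k : Fin n => 1 ≤ (k : ℕ)),
        x ^ (-((k : ℕ) : ℤ)) * ∑ j ∈ univ.filter (fun j : Fin n => (k : ℕ) ≤ (j : ℕ)), a j =
      ∑ j, a j - ∑ j, a j * x⁻¹ ^ (j : ℕ) := by
  have hinner (k : Fin n) :
      x ^ (-((k : ℕ) : ℤ)) * ∑ j ∈ univ.filter (fun j : Fin n => (k : ℕ) ≤ j), a j =
        ∑ j ∈ univ.filter (fun j : Fin n => (k : ℕ) ≤ j), x⁻¹ ^ (k : ℕ) * a j := by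
    rw [_root_.zpow_neg, zpow_natCast, inv_pow, mul_sum]
  rw [sum_congr rfl fun k _ => hinner k, sum_comm' (t' := (univ : Finset (Fin n)))
    (s' := fun j => univ.filter (fun k : Fin n => 1 ≤ (k : ℕ) ∧ (k : ℕ) ≤ j))
    (by intro k j; simp only [mem_filter, mem_univ, true_and, and_true]), mul_sum,
    ← sum_sub_distrib]
  refine sum_congr rfl fun j _ => ?_
  rw [← sum_mul, ← mul_assoc, sub_one_mul_sum_inv_pow_filter j hx]
  ring

theorem Cfirst_eq {n : ℕ} {aL : Fin n → ℝ} (aR : Fin n → ℝ) {α : ℝ} (hα : 1 < α)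
    (hroot : ∑ i, aL i * α⁻¹ ^ (i : ℕ) = -α) (hΔ : (1 - bcMat n aL).det ≠ 0) :
    Cfirst n aL aR α = α / (α - 1) / ∑ i, aR i * α⁻¹ ^ (i : ℕ) := by
  have hnum := sub_one_mul_sum_zpow_mul_sum_filter aL (by positivity : α ≠ 0)
  rw [hroot] at hnum
  rw [det_one_sub_bcMat] at hΔ
  have hden : ∑ i : Fin n, α ^ (-((i : ℕ) : ℤ)) * aR i = ∑ i, aR i * α⁻¹ ^ (i : ℕ) :=
    sum_congr rfl fun i _ => by rw [_root_.zpow_neg, zpow_natCast, inv_pow, mul_comm]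
  rw [Cfirst, det_one_sub_bcMat, hden]
  congr 1
  have : α - 1 ≠ 0 := by linarith
  field_simp
  linear_combination hnum

theorem isVertexP.abs_apply {n : ℕ} {aL : Fin n → ℝ} {α r : ℝ} {s : Fin (n - 1) → ℝ}
    {P : Fin n → ℝ} (hP : isVertexP n aL α r s P) (hs : ∀ j, s j = 1 ∨ s j = -1) (hα : 1 < α)
    (hr : 0 ≤ r) (i : Fin n) (hi : 1 ≤ (i : ℕ)) :
    |P i| = 2 * α / (α - 1) * ((n - 1).choose i : ℝ) * r ^ (i : ℕ) := by
  have hM : 0 ≤ 2 * α / (α - 1) * ((n - 1).choose i : ℝ) * r ^ (i : ℕ) := by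
    have : 0 < α - 1 := by linarith
    positivity
  rw [hP.2 i hi, abs_mul, abs_of_nonneg hM]
  rcases hs ⟨i - 1, by omega⟩ with h | h <;> simp [h]

theorem sum_choose_succ_mul_pow (m : ℕ) (r : ℝ) :
    ∑ i : Fin m, (m.choose (i + 1) : ℝ) * r ^ ((i : ℕ) + 1) = (1 + r) ^ m - 1 := by
  rw [add_comm 1 r, add_pow, sum_range_succ', Fin.sum_univ_eq_sum_range
    (fun i => (m.choose (i + 1) : ℝ) * r ^ (i + 1))]
  simp [mul_comm]

theorem abs_sum_inv_pow_succ_mul_le {m : ℕ} {α r : ℝ} (hα : 1 < α) (P : Fin (m + 1) → ℝ)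
    (hP : ∀ i : Fin m, |P i.succ| = 2 * α / (α - 1) * (m.choose (i + 1) : ℝ) * r ^ ((i : ℕ) + 1)) :
    |∑ i : Fin m, α⁻¹ ^ ((i : ℕ) + 1) * P i.succ| ≤ 2 / (α - 1) * ((1 + r) ^ m - 1) := by
  have hα0 : 0 < α := by linarith
  have hα1 : 0 < α - 1 := by linarith
  have hterm (i : Fin m) : |α⁻¹ ^ ((i : ℕ) + 1) * P i.succ| ≤
      2 / (α - 1) * ((m.choose (i + 1) : ℝ) * r ^ ((i : ℕ) + 1)) := by
    have hpow : α⁻¹ ^ ((i : ℕ) + 1) ≤ α⁻¹ :=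
      pow_le_of_le_one (by positivity) (inv_le_one_of_one_le₀ hα.le) (by omega)
    rw [abs_mul, abs_of_pos (by positivity), hP]
    calc α⁻¹ ^ ((i : ℕ) + 1) * (2 * α / (α - 1) * (m.choose (i + 1) : ℝ) * r ^ ((i : ℕ) + 1))
        ≤ α⁻¹ * (2 * α / (α - 1) * (m.choose (i + 1) : ℝ) * r ^ ((i : ℕ) + 1)) :=
          mul_le_mul_of_nonneg_right hpow (by rw [← hP]; positivity)
      _ = _ := by field_simp
  calc |∑ i : Fin m, α⁻¹ ^ ((i : ℕ) + 1) * P i.succ|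
      ≤ ∑ i : Fin m, |α⁻¹ ^ ((i : ℕ) + 1) * P i.succ| := abs_sum_le_sum_abs _ _
    _ ≤ _ := sum_le_sum fun i _ => hterm i
    _ = _ := by rw [← mul_sum, sum_choose_succ_mul_pow]

theorem isVertexP.exists_apply_zero_eq {m : ℕ} {aL : Fin (m + 1) → ℝ} {α r : ℝ}
    {s : Fin (m + 1 - 1) → ℝ} {P : Fin (m + 1) → ℝ} (hP : isVertexP (m + 1) aL α r s P)
    (hs : ∀ j, s j = 1 ∨ s j = -1) (hα : 1 < α) (hr : 0 ≤ r) (hmr : (m : ℝ) * r ≤ 1)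
    (hroot : ∑ i, aL i * α⁻¹ ^ (i : ℕ) = -α) (hΔ : (1 - bcMat (m + 1) aL).det ≠ 0) :
    ∃ T : ℝ, P 0 = 1 / (1 - α) - T ∧ |T| ≤ 2 / (α - 1) * (2 * (m * r)) := by
  have hα0 : α ≠ 0 := by positivity
  have hα1 : 1 - α ≠ 0 := by linarith
  have hE := dotProduct_powVec_inv_eq_of_mem_Eset hα0 hP.1
  have hY := powVec_inv_dotProduct_Ypt m.succ_pos hα0 hroot hΔ
  refine ⟨∑ i : Fin m, α⁻¹ ^ ((i : ℕ) + 1) * P i.succ, ?_, ?_⟩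
  · rw [dotProduct, Fin.sum_univ_succ] at hE
    simp only [powVec, Fin.val_zero, pow_zero, one_mul, Fin.val_succ] at hE
    rw [← hE] at hY
    rw [eq_sub_iff_add_eq, eq_div_iff hα1]
    linear_combination hY
  · refine (abs_sum_inv_pow_succ_mul_le (r := r) hα P fun i => ?_).trans ?_
    · simpa using hP.abs_apply hs hα hr i.succ (by simp)
    · have : 0 < α - 1 := by linarith
      gcongr
      exact one_add_pow_sub_one_le hr hmr

theorem vertex_ratio_lt {α β ε g T : ℝ} (hα : 1 < α) (hβ : 1 < β) (hε : 0 ≤ ε)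
    (hεφ : 10 * ε < 1 / α + 1 / β - 1) (hg : |g - 1| ≤ 2 * ε)
    (hT : |T| ≤ 2 / (α - 1) * (2 * ε)) :
    2 * α / (α - 1) * ε / (α / (α - 1) / ((α + β) * g - α) - (1 / (1 - α) - T)) <
      β * (1 / α + 1 / β - 1) / 3 := by
  set φ := 1 / α + 1 / β - 1
  set G := (α + β) * g - α
  have hα1 : 0 < α - 1 := by linarith
  have hεα : 10 * ε * α < 1 := by
    have : φ < 1 / α := by simp only [φ]; linarith [(div_lt_one (by linarith : (0:ℝ) < β)).mpr hβ]
    have := mul_lt_mul_of_pos_right (hεφ.trans this) (by linarith : 0 < α)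
    rwa [one_div_mul_cancel (by positivity)] at this
  have hεβ : 10 * ε * β < 1 := by
    have : φ < 1 / β := by simp only [φ]; linarith [(div_lt_one (by linarith : (0:ℝ) < α)).mpr hα]
    have := mul_lt_mul_of_pos_right (hεφ.trans this) (by linarith : 0 < β)
    rwa [one_div_mul_cancel (by positivity)] at this
  obtain ⟨hg₁, hg₂⟩ := abs_le.mp hg
  have hGpos : 0 < G := by nlinarith
  have hGlt : G < β + 2 / 5 := by nlinarith
  have hq : 3 * α < 5 * β * (α / G) := by
    rw [mul_div_assoc', lt_div_iff₀ hGpos]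
    nlinarith
  have hε1 : 10 * ε < 1 := by nlinarith
  have hT' : -(4 * ε) ≤ (α - 1) * T := by
    have : (α - 1) * |T| ≤ 4 * ε := by
      calc (α - 1) * |T| ≤ (α - 1) * (2 / (α - 1) * (2 * ε)) :=
            mul_le_mul_of_nonneg_left hT hα1.le
        _ = 4 * ε := by field_simp; ring
    nlinarith [neg_abs_le T]
  have hD : α / (α - 1) / G - (1 / (1 - α) - T) = (α / G + 1 + (α - 1) * T) / (α - 1) := by
    have : 1 - α ≠ 0 := by linarith
    field_simp
    ring
  set q := α / G
  have hDpos : 0 < q + 1 + (α - 1) * T := by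
    have : 0 < q := by positivity
    linarith
  have hφ : 0 < φ := by linarith
  have key : 2 * α * ε < β * φ / 3 * (q + 1 + (α - 1) * T) := by
    nlinarith [mul_pos hφ (by linarith : (0:ℝ) < β)]
  rw [hD]
  calc 2 * α / (α - 1) * ε / ((q + 1 + (α - 1) * T) / (α - 1))
      = 2 * α * ε / (q + 1 + (α - 1) * T) := by field_simp
    _ < β * φ / 3 := by rwa [div_lt_iff₀ hDpos]

/-- Under Assumption (A) and `r(n−1) < (1/10)(1/α + 1/β − 1)`, every vertex `P^(s)`
satisfies `|P^(s)₂|/(C₁ − P^(s)₁) < βφ/3`, where `φ = 1/α + 1/β − 1`. -/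
theorem stmt_14 (n : ℕ) (hn : 2 ≤ n) (aL aR : Fin n → ℝ) (α β r : ℝ)
    (hA : assumptionA n aL aR α β r)
    (hrn : r * ((n : ℝ) - 1) < 1 / 10 * (1 / α + 1 / β - 1))
    (s : Fin (n - 1) → ℝ) (hs : ∀ j, s j = 1 ∨ s j = -1)
    (P : Fin n → ℝ) (hP : isVertexP n aL α r s P) :
    |P ⟨1, by omega⟩| / (Cfirst n aL aR α - P ⟨0, by omega⟩) <
      β * (1 / α + 1 / β - 1) / 3 := by
  obtain ⟨m, rfl⟩ : ∃ m, n = m + 1 := ⟨n - 1, by omega⟩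
  obtain ⟨hα, hβ, hr, hr1, hL, hR⟩ := hA
  have hεφ : 10 * (m * r) < 1 / α + 1 / β - 1 := by push_cast at hrn; linarith
  have hmr : (m : ℝ) * r ≤ 1 := by
    have : 1 / α < 1 := (div_lt_one (by linarith)).mpr hα
    have : 1 / β < 1 := (div_lt_one (by linarith)).mpr hβ
    linarith
  have hroot := hL.sum_mul_inv_pow_eq_neg m.succ_pos (by positivity)
  have hΔ := hL.det_one_sub_ne_zero hr1 hα.ne'
  obtain ⟨g, hD, hg⟩ := hR.exists_sum_mul_inv_pow_eq m.succ_pos hα.le (by linarith)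
    (by simpa using hmr)
  obtain ⟨T, hP0, hT⟩ := hP.exists_apply_zero_eq hs hα hr.le hmr hroot hΔ
  have hP1 : |P ⟨1, by omega⟩| = 2 * α / (α - 1) * (m * r) := by
    rw [hP.abs_apply hs hα hr.le ⟨1, by omega⟩ le_rfl]
    simp [mul_assoc]
  rw [Cfirst_eq aR hα hroot hΔ, hD, sub_neg_eq_add, Fin.zero_eta, hP0, hP1]
  exact vertex_ratio_lt hα hβ (by positivity) hεφ (by simpa using hg) hT
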